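/- Let M : ℝⁿ \ {0} → [0,∞) be continuous, invariant under dilation by 2 (M(2ξ) = M(ξ)), with all seminorms c_{α,β} finite, and suppose ∫_{SO(n)}∫_0^1 M(2^κ Aξ) dκ dμ(A) = α > 0 for ξ ≠ 0. Let {A_k} be dense in SO(n) with A_1 = id and {κ(k)} dense in [0,1] with κ(1) = 0. Then for all sufficiently large K, the function m_K(ξ) := ∑_{k₁,k₂=1}^{K} M(2^{κ(k₁)} A_{k₂}^{-1} ξ) satisfies: (i) sup_{ξ≠0} |ξ|^{|α|} |∂_ξ^α m_K(ξ)| < ∞ for all multi-indices α (i.e. m_K is a smooth symbol homogeneous-type of degree 0 in estimates), and (ii) inf_{ξ ∈ ℝⁿ \ {0}} m_K(ξ) > 0. -/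

import Mathlib

open MeasureTheory Metric

noncomputable section

instance {n : ℕ} : MeasurableSpace (Matrix (Fin n) (Fin n) ℝ) := MeasurableSpace.pi

/-- Directional derivative of a function along a vector `v`. -/
def dirDeriv {E F : Type*} [NormedAddCommGroup E] [NormedSpace ℝ E]
    [NormedAddCommGroup F] [NormedSpace ℝ F] (v : E) (f : E → F) : E → F :=
  fun x => fderiv ℝ f x v

/-- Iterated directional derivative along a list of vectors (multi-index `∂^α`). -/
def multiDeriv {E F : Type*} [NormedAddCommGroup E] [NormedSpace ℝ E]
    [NormedAddCommGroup F] [NormedSpace ℝ F] (vs : List E) (f : E → F) : E → F :=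
  vs.foldr dirDeriv f

section AuxCalculus

variable {E F : Type*} [NormedAddCommGroup E] [NormedSpace ℝ E]
    [NormedAddCommGroup F] [NormedSpace ℝ F]

@[simp] lemma multiDeriv_nil (f : E → F) : multiDeriv [] f = f := rfl

lemma multiDeriv_cons (v : E) (vs : List E) (f : E → F) :
    multiDeriv (v :: vs) f = fun x => fderiv ℝ (multiDeriv vs f) x v := rfl

lemma multiDeriv_contDiffOn {U : Set E} (hU : IsOpen U) {f : E → F}
    (hf : ContDiffOn ℝ (⊤ : ℕ∞) f U) (vs : List E) :
    ContDiffOn ℝ (⊤ : ℕ∞) (multiDeriv vs f) U := by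
  induction vs with
  | nil => exact hf
  | cons v vs ih =>
    rw [multiDeriv_cons]
    exact (ih.fderiv_of_isOpen hU (by simp)).clm_apply contDiffOn_const

lemma multiDeriv_differentiableAt {U : Set E} (hU : IsOpen U) {f : E → F}
    (hf : ContDiffOn ℝ (⊤ : ℕ∞) f U) (vs : List E) {x : E} (hx : x ∈ U) :
    DifferentiableAt ℝ (multiDeriv vs f) x :=
  ((multiDeriv_contDiffOn hU hf vs).differentiableOn (by simp)).differentiableAt
    (hU.mem_nhds hx)

lemma multiDeriv_sum {U : Set E} (hU : IsOpen U) {ι : Type*} (s : Finset ι)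
    (F' : ι → E → F) (hF : ∀ i ∈ s, ContDiffOn ℝ (⊤ : ℕ∞) (F' i) U) (vs : List E)
    {x : E} (hx : x ∈ U) :
    multiDeriv vs (fun y => ∑ i ∈ s, F' i y) x = ∑ i ∈ s, multiDeriv vs (F' i) x := by
  induction vs generalizing x with
  | nil => simp
  | cons v vs ih =>
    have hev : multiDeriv vs (fun y => ∑ i ∈ s, F' i y)
        =ᶠ[nhds x] (fun y => ∑ i ∈ s, multiDeriv vs (F' i) y) :=
      Filter.eventually_of_mem (hU.mem_nhds hx) (fun y hy => ih hy)
    show fderiv ℝ (multiDeriv vs fun y => ∑ i ∈ s, F' i y) x v = _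
    rw [hev.fderiv_eq, fderiv_fun_sum (fun i hi =>
      multiDeriv_differentiableAt hU (hF i hi) vs hx)]
    simp [multiDeriv_cons]

lemma pi_single_expansion {n : ℕ} (v : Fin n → ℝ) :
    v = ∑ i : Fin n, v i • (Pi.single i (1:ℝ) : Fin n → ℝ) := by
  ext j
  simp [Pi.single_apply, eq_comm]

lemma multiDeriv_expand {n : ℕ} {U : Set (Fin n → ℝ)} (hU : IsOpen U)
    {f : (Fin n → ℝ) → F} (hf : ContDiffOn ℝ (⊤ : ℕ∞) f U) (vs : List (Fin n → ℝ))
    {x : Fin n → ℝ} (hx : x ∈ U) :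
    multiDeriv vs f x = ∑ g : Fin vs.length → Fin n,
      (∏ j, vs.get j (g j)) •
        multiDeriv ((List.ofFn g).map (fun i => Pi.single i (1:ℝ))) f x := by
  induction vs generalizing x with
  | nil => simp
  | cons v vs ih =>
    have hev : multiDeriv vs f =ᶠ[nhds x] (fun y => ∑ g : Fin vs.length → Fin n,
        (∏ j, vs.get j (g j)) •
          multiDeriv ((List.ofFn g).map (fun i => Pi.single i (1:ℝ))) f y) :=
      Filter.eventually_of_mem (hU.mem_nhds hx) (fun y hy => ih hy)
    show fderiv ℝ (multiDeriv vs f) x v = _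
    have hdiff : ∀ g : Fin vs.length → Fin n, DifferentiableAt ℝ
        (multiDeriv ((List.ofFn g).map (fun i => Pi.single i (1:ℝ))) f) x :=
      fun g => multiDeriv_differentiableAt hU hf _ hx
    rw [hev.fderiv_eq, fderiv_fun_sum (A := fun g y => (∏ j, vs.get j (g j)) •
        multiDeriv ((List.ofFn g).map (fun i => Pi.single i (1:ℝ))) f y)
      (fun g _ => ((hdiff g).const_smul _))]
    have hsmul : ∀ g : Fin vs.length → Fin n,
        fderiv ℝ (fun y => (∏ j, vs.get j (g j)) •
          multiDeriv ((List.ofFn g).map (fun i => Pi.single i (1:ℝ))) f y) x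
        = (∏ j, vs.get j (g j)) •
          fderiv ℝ (multiDeriv ((List.ofFn g).map (fun i => Pi.single i (1:ℝ))) f) x :=
      fun g => fderiv_const_smul (hdiff g) _
    have hv : ∀ (L : (Fin n → ℝ) →L[ℝ] F), L v = ∑ i : Fin n, v i • L (Pi.single i 1) := by
      intro L
      conv_lhs => rw [pi_single_expansion v]
      rw [map_sum]
      simp
    rw [ContinuousLinearMap.sum_apply]
    simp only [hsmul, ContinuousLinearMap.smul_apply]
    have key : ∀ g : Fin vs.length → Fin n,
        (fderiv ℝ (multiDeriv ((List.ofFn g).map (fun i => Pi.single i (1:ℝ))) f) x) v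
        = ∑ i : Fin n, v i • multiDeriv
            ((List.ofFn (Fin.cons i g : Fin (vs.length+1) → Fin n)).map
              (fun i => Pi.single i (1:ℝ))) f x := by
      intro g
      rw [hv]
      congr 1
      ext i
      congr 1
      rw [List.ofFn_succ]
      simp [multiDeriv_cons]
    simp only [key, Finset.smul_sum]
    rw [Finset.sum_comm]
    have hpt : ∀ (i : Fin n) (g : Fin vs.length → Fin n),
        (∏ j, vs.get j (g j)) • v i •
            multiDeriv ((List.ofFn (Fin.cons i g : Fin (vs.length+1) → Fin n)).map
              (fun i => Pi.single i (1:ℝ))) f x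
        = (∏ j : Fin (vs.length+1), (v :: vs).get j
              ((Fin.cons i g : Fin (vs.length+1) → Fin n) j)) •
            multiDeriv ((List.ofFn (Fin.cons i g : Fin (vs.length+1) → Fin n)).map
              (fun i => Pi.single i (1:ℝ))) f x := by
      intro i g
      rw [Fin.prod_univ_succ]
      simp only [Fin.cons_zero, Fin.cons_succ, List.get_cons_zero, List.get_cons_succ]
      rw [smul_smul, mul_comm]
      simp [Fin.succ]
    simp only [hpt]
    exact ((Fintype.sum_prod_type (f := fun p : Fin n × (Fin vs.length → Fin n) =>
        (∏ j : Fin (vs.length+1), (v :: vs).get j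
            ((Fin.cons p.1 p.2 : Fin (vs.length+1) → Fin n) j)) •
          multiDeriv ((List.ofFn (Fin.cons p.1 p.2 : Fin (vs.length+1) → Fin n)).map
            (fun i => Pi.single i (1:ℝ))) f x)).symm).trans
      (Fintype.sum_equiv (Fin.consEquiv (fun _ => Fin n)) _ _ (fun p => by
        simp [Fin.consEquiv_apply]))

/-- Chain rule for `multiDeriv` with a continuous linear map preserving an open set. -/
lemma multiDeriv_comp_clm {U : Set E} (hU : IsOpen U) (T : E →L[ℝ] E)
    (hT : Set.MapsTo T U U) {f : E → F} (hf : ContDiffOn ℝ (⊤ : ℕ∞) f U)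
    (vs : List E) {x : E} (hx : x ∈ U) :
    multiDeriv vs (fun y => f (T y)) x = multiDeriv (vs.map T) f (T x) := by
  induction vs generalizing x with
  | nil => rfl
  | cons v vs ih =>
    show fderiv ℝ (multiDeriv vs (fun y => f (T y))) x v = _
    have hev : multiDeriv vs (fun y => f (T y))
        =ᶠ[nhds x] (fun y => multiDeriv (vs.map T) f (T y)) :=
      Filter.eventually_of_mem (hU.mem_nhds hx) (fun y hy => ih hy)
    rw [hev.fderiv_eq]
    have hdg : DifferentiableAt ℝ (multiDeriv (vs.map T) f) (T x) :=
      multiDeriv_differentiableAt hU hf _ (hT hx)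
    have hcomp : fderiv ℝ ((multiDeriv (vs.map T) f) ∘ T) x
        = (fderiv ℝ (multiDeriv (vs.map T) f) (T x)).comp (fderiv ℝ T x) :=
      fderiv_comp x hdg (T.differentiableAt)
    rw [show (fun y => multiDeriv (vs.map T) f (T y)) = (multiDeriv (vs.map T) f) ∘ T from rfl,
      hcomp, T.fderiv]
    rfl

end AuxCalculus

section AuxBounds

lemma isOpen_ne_zero' {n : ℕ} : IsOpen {ξ : Fin n → ℝ | ξ ≠ 0} :=
  isOpen_compl_singleton

lemma coord_bound {n : ℕ} (hn : 0 < n) (M : (Fin n → ℝ) → ℝ)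
    (hMsemi : ∀ A : List (Fin n), ∃ C : ℝ, ∀ ξ : Fin n → ℝ, ξ ≠ 0 →
      ‖ξ‖ ^ (A.length : ℝ) *
        ‖multiDeriv (A.map (fun i => Pi.single i (1:ℝ))) M ξ‖ ≤ C) (m : ℕ) :
    ∃ C : ℝ, 0 ≤ C ∧ ∀ cs : List (Fin n), cs.length = m → ∀ ξ : Fin n → ℝ, ξ ≠ 0 →
      ‖ξ‖ ^ (m : ℝ) * ‖multiDeriv (cs.map (fun i => Pi.single i (1:ℝ))) M ξ‖ ≤ C := by
  haveI : Nonempty (Fin n) := ⟨⟨0, hn⟩⟩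
  choose C0 hC0 using hMsemi
  refine ⟨max 0 ((Finset.univ : Finset (Fin m → Fin n)).sup' ⟨Classical.arbitrary _,
    Finset.mem_univ _⟩ (fun g => C0 (List.ofFn g))), le_max_left _ _, ?_⟩
  intro cs h ξ hξ
  subst h
  have hcs : List.ofFn cs.get = cs := List.ofFn_get cs
  refine le_trans ?_ (le_max_of_le_right (Finset.le_sup' (fun g => C0 (List.ofFn g))
    (Finset.mem_univ cs.get)))
  rw [hcs]
  exact hC0 cs ξ hξ

lemma term_bound {n : ℕ} (hn : 0 < n) (M : (Fin n → ℝ) → ℝ)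
    (hMsmooth : ContDiffOn ℝ (⊤ : ℕ∞) M {ξ : Fin n → ℝ | ξ ≠ 0})
    (hMsemi : ∀ A : List (Fin n), ∃ C : ℝ, ∀ ξ : Fin n → ℝ, ξ ≠ 0 →
      ‖ξ‖ ^ (A.length : ℝ) *
        ‖multiDeriv (A.map (fun i => Pi.single i (1:ℝ))) M ξ‖ ≤ C)
    (T S : (Fin n → ℝ) →L[ℝ] (Fin n → ℝ)) (hST : ∀ x, S (T x) = x)
    (bs : List (Fin n)) :
    ∃ C : ℝ, ∀ ξ : Fin n → ℝ, ξ ≠ 0 →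
      ‖ξ‖ ^ (bs.length : ℝ) *
        ‖multiDeriv (bs.map (fun i => Pi.single i (1:ℝ))) (fun y => M (T y)) ξ‖ ≤ C := by
  set U : Set (Fin n → ℝ) := {ξ | ξ ≠ 0} with hUdef
  have hU : IsOpen U := isOpen_ne_zero'
  have hTne : ∀ x : Fin n → ℝ, x ≠ 0 → T x ≠ 0 := by
    intro x hx h0
    exact hx (by rw [← hST x, h0, map_zero])
  have hmap : Set.MapsTo T U U := fun x hx => hTne x hx
  set m := bs.length with hm
  set ws : List (Fin n → ℝ) := (bs.map (fun i => Pi.single i (1:ℝ))).map T with hws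
  have hlen : ws.length = m := by simp [hws, hm]
  obtain ⟨CM, hCM0, hCM⟩ := coord_bound hn M hMsemi m
  set P : ℝ := ∑ g : Fin ws.length → Fin n, |∏ j, ws.get j (g j)| with hP
  have hP0 : 0 ≤ P := Finset.sum_nonneg (fun _ _ => abs_nonneg _)
  refine ⟨P * CM * ‖S‖ ^ m, ?_⟩
  intro ξ hξ
  have hξU : ξ ∈ U := hξ
  have hTξ : T ξ ≠ 0 := hTne ξ hξ
  have hTξU : T ξ ∈ U := hTξ
  have h1 : multiDeriv (bs.map (fun i => Pi.single i (1:ℝ))) (fun y => M (T y)) ξ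
      = ∑ g : Fin ws.length → Fin n, (∏ j, ws.get j (g j)) •
          multiDeriv ((List.ofFn g).map (fun i => Pi.single i (1:ℝ))) M (T ξ) := by
    rw [multiDeriv_comp_clm hU T hmap hMsmooth _ hξU]
    exact multiDeriv_expand hU hMsmooth ws hTξU
  have hQ : (0:ℝ) < ‖T ξ‖ ^ (m : ℝ) :=
    Real.rpow_pos_of_pos (norm_pos_iff.mpr hTξ) _
  have hbd : ∀ g : Fin ws.length → Fin n,
      ‖multiDeriv ((List.ofFn g).map (fun i => Pi.single i (1:ℝ))) M (T ξ)‖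
        ≤ CM / ‖T ξ‖ ^ (m : ℝ) := by
    intro g
    rw [le_div_iff₀ hQ, mul_comm]
    exact hCM (List.ofFn g) (by simp [hlen]) (T ξ) hTξ
  have h2 : ‖multiDeriv (bs.map (fun i => Pi.single i (1:ℝ))) (fun y => M (T y)) ξ‖
      ≤ P * (CM / ‖T ξ‖ ^ (m : ℝ)) := by
    rw [h1]
    refine (norm_sum_le _ _).trans ?_
    rw [hP, Finset.sum_mul]
    refine Finset.sum_le_sum (fun g _ => ?_)
    rw [norm_smul, Real.norm_eq_abs]
    exact mul_le_mul_of_nonneg_left (hbd g) (abs_nonneg _)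
  have hnorm : ‖ξ‖ ^ (m : ℝ) ≤ ‖S‖ ^ m * ‖T ξ‖ ^ (m : ℝ) := by
    have h3 : ‖ξ‖ ≤ ‖S‖ * ‖T ξ‖ := by
      conv_lhs => rw [← hST ξ]
      exact S.le_opNorm _
    calc ‖ξ‖ ^ (m : ℝ) ≤ (‖S‖ * ‖T ξ‖) ^ (m : ℝ) :=
          Real.rpow_le_rpow (norm_nonneg _) h3 (Nat.cast_nonneg _)
      _ = ‖S‖ ^ (m : ℝ) * ‖T ξ‖ ^ (m : ℝ) :=
          Real.mul_rpow (norm_nonneg _) (norm_nonneg _)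
      _ = ‖S‖ ^ m * ‖T ξ‖ ^ (m : ℝ) := by rw [Real.rpow_natCast]
  calc ‖ξ‖ ^ (m : ℝ) * ‖multiDeriv (bs.map (fun i => Pi.single i (1:ℝ))) (fun y => M (T y)) ξ‖
      ≤ (‖S‖ ^ m * ‖T ξ‖ ^ (m : ℝ)) * (P * (CM / ‖T ξ‖ ^ (m : ℝ))) := by
        refine mul_le_mul hnorm h2 (norm_nonneg _) ?_
        positivity
    _ = P * CM * ‖S‖ ^ m * (‖T ξ‖ ^ (m : ℝ) / ‖T ξ‖ ^ (m : ℝ)) := by ring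
    _ = P * CM * ‖S‖ ^ m := by rw [div_self (ne_of_gt hQ), mul_one]

end AuxBounds

section AuxSO

variable {n : ℕ}

lemma so_star_eq_transpose (B : Matrix (Fin n) (Fin n) ℝ) : star B = B.transpose := by
  ext i j
  simp [Matrix.star_apply]

lemma so_inv_eq_transpose (a : ↥(Matrix.specialOrthogonalGroup (Fin n) ℝ)) :
    ((a : Matrix (Fin n) (Fin n) ℝ))⁻¹ = (a : Matrix (Fin n) (Fin n) ℝ).transpose := by
  refine Matrix.inv_eq_left_inv ?_
  rw [← so_star_eq_transpose]
  exact a.2.1.1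

lemma so_mul_inv (a : ↥(Matrix.specialOrthogonalGroup (Fin n) ℝ)) :
    (a : Matrix (Fin n) (Fin n) ℝ) * ((a : Matrix (Fin n) (Fin n) ℝ))⁻¹ = 1 := by
  rw [so_inv_eq_transpose, ← so_star_eq_transpose (a : Matrix (Fin n) (Fin n) ℝ)]
  exact a.2.1.2

lemma so_inv_mul (a : ↥(Matrix.specialOrthogonalGroup (Fin n) ℝ)) :
    ((a : Matrix (Fin n) (Fin n) ℝ))⁻¹ * (a : Matrix (Fin n) (Fin n) ℝ) = 1 := by
  rw [so_inv_eq_transpose, ← so_star_eq_transpose (a : Matrix (Fin n) (Fin n) ℝ)]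
  exact a.2.1.1

lemma so_star_mem (a : ↥(Matrix.specialOrthogonalGroup (Fin n) ℝ)) :
    star (a : Matrix (Fin n) (Fin n) ℝ) ∈ Matrix.specialOrthogonalGroup (Fin n) ℝ := by
  refine Matrix.mem_specialOrthogonalGroup_iff.mpr ⟨Unitary.star_mem a.2.1, ?_⟩
  rw [so_star_eq_transpose, Matrix.det_transpose]
  exact (Matrix.mem_specialOrthogonalGroup_iff.mp a.2).2

lemma so_mulVec_ne_zero (a : ↥(Matrix.specialOrthogonalGroup (Fin n) ℝ))
    {ξ : Fin n → ℝ} (hξ : ξ ≠ 0) :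
    (a : Matrix (Fin n) (Fin n) ℝ).mulVec ξ ≠ 0 := by
  intro h
  apply hξ
  have := congrArg (fun w => Matrix.mulVec ((a : Matrix (Fin n) (Fin n) ℝ))⁻¹ w) h
  simpa [Matrix.mulVec_mulVec, so_inv_mul] using this

lemma so_inv_mulVec_ne_zero (a : ↥(Matrix.specialOrthogonalGroup (Fin n) ℝ))
    {ξ : Fin n → ℝ} (hξ : ξ ≠ 0) :
    Matrix.mulVec ((a : Matrix (Fin n) (Fin n) ℝ))⁻¹ ξ ≠ 0 := by
  intro h
  apply hξ
  have := congrArg (fun w => Matrix.mulVec (a : Matrix (Fin n) (Fin n) ℝ) w) h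
  simpa [Matrix.mulVec_mulVec, so_mul_inv] using this

lemma continuous_two_rpow : Continuous fun t : ℝ => (2:ℝ) ^ t := by
  have : (fun t : ℝ => (2:ℝ) ^ t) = fun t => Real.exp (Real.log 2 * t) := by
    funext t
    rw [Real.rpow_def_of_pos two_pos]
  rw [this]
  exact Real.continuous_exp.comp (continuous_const.mul continuous_id)

lemma continuous_G :
    Continuous (fun p : ℝ × ↥(Matrix.specialOrthogonalGroup (Fin n) ℝ) × (Fin n → ℝ) =>
      (2:ℝ) ^ p.1 • Matrix.mulVec ((p.2.1 : Matrix (Fin n) (Fin n) ℝ))⁻¹ p.2.2) := by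
  have heq : (fun p : ℝ × ↥(Matrix.specialOrthogonalGroup (Fin n) ℝ) × (Fin n → ℝ) =>
      (2:ℝ) ^ p.1 • Matrix.mulVec ((p.2.1 : Matrix (Fin n) (Fin n) ℝ))⁻¹ p.2.2)
      = fun p => (2:ℝ) ^ p.1 •
        Matrix.mulVec ((p.2.1 : Matrix (Fin n) (Fin n) ℝ)).transpose p.2.2 := by
    funext p
    rw [so_inv_eq_transpose]
  rw [heq]
  refine Continuous.smul (continuous_two_rpow.comp continuous_fst) ?_
  exact Continuous.matrix_mulVec
    ((continuous_subtype_val.comp (continuous_fst.comp continuous_snd)).matrix_transpose)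
    (continuous_snd.comp continuous_snd)

lemma exists_pos_point (M : (Fin n → ℝ) → ℝ) (hMnonneg : ∀ ξ, 0 ≤ M ξ)
    (μ : Measure ↥(Matrix.specialOrthogonalGroup (Fin n) ℝ))
    (α : ℝ) (hα : 0 < α)
    (havg : ∀ ξ : Fin n → ℝ, ξ ≠ 0 →
      (∫ A : ↥(Matrix.specialOrthogonalGroup (Fin n) ℝ),
        (∫ κ in Set.Icc (0:ℝ) 1,
          M ((2:ℝ)^κ • (Matrix.mulVec (A : Matrix (Fin n) (Fin n) ℝ) ξ))) ∂μ) = α)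
    {ξ : Fin n → ℝ} (hξ : ξ ≠ 0) :
    ∃ (a : ↥(Matrix.specialOrthogonalGroup (Fin n) ℝ)) (t : ℝ), t ∈ Set.Icc (0:ℝ) 1 ∧
      0 < M ((2:ℝ)^t • Matrix.mulVec (a : Matrix (Fin n) (Fin n) ℝ) ξ) := by
  by_contra h
  push_neg at h
  have hzero : ∀ (a : ↥(Matrix.specialOrthogonalGroup (Fin n) ℝ)) (t : ℝ),
      t ∈ Set.Icc (0:ℝ) 1 →
      M ((2:ℝ)^t • Matrix.mulVec (a : Matrix (Fin n) (Fin n) ℝ) ξ) = 0 := by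
    intro a t ht
    exact le_antisymm (h a t ht) (hMnonneg _)
  have hint : ∀ a : ↥(Matrix.specialOrthogonalGroup (Fin n) ℝ),
      (∫ t in Set.Icc (0:ℝ) 1,
        M ((2:ℝ)^t • Matrix.mulVec (a : Matrix (Fin n) (Fin n) ℝ) ξ)) = 0 := by
    intro a
    rw [setIntegral_congr_fun measurableSet_Icc (fun t ht => hzero a t ht)]
    simp
  have := havg ξ hξ
  rw [show (fun A : ↥(Matrix.specialOrthogonalGroup (Fin n) ℝ) =>
      (∫ t in Set.Icc (0:ℝ) 1,
        M ((2:ℝ)^t • Matrix.mulVec (A : Matrix (Fin n) (Fin n) ℝ) ξ))) = fun _ => (0:ℝ) from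
    funext hint] at this
  simp at this
  linarith

lemma M_dil_zpow (M : (Fin n → ℝ) → ℝ)
    (hMdil : ∀ ξ : Fin n → ℝ, M ((2:ℝ) • ξ) = M ξ) :
    ∀ (j : ℤ) (ξ : Fin n → ℝ), M ((2:ℝ) ^ j • ξ) = M ξ := by
  have key : ∀ (k : ℕ) (ξ : Fin n → ℝ), M ((2:ℝ) ^ (k:ℤ) • ξ) = M ξ := by
    intro k
    induction k with
    | zero => intro ξ; simp
    | succ k ih =>
      intro ξ
      have : ((2:ℝ) ^ ((k+1:ℕ):ℤ) • ξ) = (2:ℝ) • ((2:ℝ) ^ ((k:ℕ):ℤ) • ξ) := by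
        rw [smul_smul]
        congr 1
        push_cast
        rw [zpow_add₀ (by norm_num : (2:ℝ) ≠ 0)]
        ring
      rw [this, hMdil, ih]
  intro j ξ
  rcases le_or_gt 0 j with hj | hj
  · lift j to ℕ using hj
    exact key j ξ
  · have hj' : 0 ≤ -j := by omega
    lift -j to ℕ using hj' with k hk
    have h2 : (2:ℝ) ^ (k:ℤ) • ((2:ℝ) ^ j • ξ) = ξ := by
      rw [smul_smul, ← zpow_add₀ (by norm_num : (2:ℝ) ≠ 0)]
      rw [show (k:ℤ) + j = 0 by omega]
      simp
    calc M ((2:ℝ) ^ j • ξ) = M ((2:ℝ) ^ (k:ℤ) • ((2:ℝ) ^ j • ξ)) := (key k _).symm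
      _ = M ξ := by rw [h2]

lemma exists_zpow_mem_annulus {ξ : Fin n → ℝ} (hξ : ξ ≠ 0) :
    ∃ j : ℤ, 1 ≤ ‖(2:ℝ) ^ j • ξ‖ ∧ ‖(2:ℝ) ^ j • ξ‖ ≤ 2 := by
  have hnorm : 0 < ‖ξ‖ := norm_pos_iff.mpr hξ
  obtain ⟨k, hk⟩ := exists_mem_Ico_zpow hnorm (by norm_num : (1:ℝ) < 2)
  have h1 : (0:ℝ) < 2 ^ k := zpow_pos (by norm_num) _
  have h2 : (2:ℝ) ^ (k+1) = 2 ^ k * 2 := by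
    rw [zpow_add₀ (by norm_num : (2:ℝ) ≠ 0), zpow_one]
  refine ⟨-k, ?_, ?_⟩ <;>
    rw [norm_smul, Real.norm_eq_abs, abs_of_pos (zpow_pos (by norm_num : (0:ℝ) < 2) _)]
  · rw [zpow_neg, inv_mul_eq_div, le_div_iff₀ h1, one_mul]
    exact hk.1
  · rw [zpow_neg, inv_mul_eq_div, div_le_iff₀ h1]
    have := hk.2
    rw [h2] at this
    nlinarith [this]

end AuxSO
/-- if `M ≥ 0` is continuous and smooth off `0`, dilation invariant
(`M(2ξ) = M(ξ)`), has all homogeneous seminorms finite, and its average over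
rotations and dilations is `α > 0`, then for dense sequences `{A_k} ⊆ SO(n)`
(`A_0 = 1`) and `{κ(k)} ⊆ [0,1]` (`κ(0) = 0`), the Riemann sums
`m_K(ξ) = ∑_{k₁,k₂ < K} M(2^{κ(k₁)} A_{k₂}⁻¹ ξ)` satisfy, for all large `K`,
the degree-`0` symbol estimates and a uniform positive lower bound off `0`. -/
theorem riemann_sum_symbol (n : ℕ) (hn : 0 < n)
    (M : (Fin n → ℝ) → ℝ)
    (hMcont : ContinuousOn M {ξ : Fin n → ℝ | ξ ≠ 0})
    (hMsmooth : ContDiffOn ℝ (⊤ : ℕ∞) M {ξ : Fin n → ℝ | ξ ≠ 0})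
    (hMnonneg : ∀ ξ, 0 ≤ M ξ)
    (hMdil : ∀ ξ : Fin n → ℝ, M ((2:ℝ) • ξ) = M ξ)
    (hMsemi : ∀ A : List (Fin n), ∃ C : ℝ, ∀ ξ : Fin n → ℝ, ξ ≠ 0 →
      ‖ξ‖ ^ (A.length : ℝ) *
        ‖multiDeriv (A.map (fun i => Pi.single i (1:ℝ))) M ξ‖ ≤ C)
    (μ : Measure ↥(Matrix.specialOrthogonalGroup (Fin n) ℝ))
    (hprob : IsProbabilityMeasure μ)
    (hinv : ∀ (A : ↥(Matrix.specialOrthogonalGroup (Fin n) ℝ))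
      (s : Set ↥(Matrix.specialOrthogonalGroup (Fin n) ℝ)), MeasurableSet s →
      μ ((fun B => A * B) ⁻¹' s) = μ s)
    (α : ℝ) (hα : 0 < α)
    (havg : ∀ ξ : Fin n → ℝ, ξ ≠ 0 →
      (∫ A : ↥(Matrix.specialOrthogonalGroup (Fin n) ℝ),
        (∫ κ in Set.Icc (0:ℝ) 1,
          M ((2:ℝ)^κ • (Matrix.mulVec (A : Matrix (Fin n) (Fin n) ℝ) ξ))) ∂μ) = α)
    (A : ℕ → ↥(Matrix.specialOrthogonalGroup (Fin n) ℝ))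
    (hAdense : DenseRange A) (hA0 : (A 0 : Matrix (Fin n) (Fin n) ℝ) = 1)
    (κ : ℕ → ℝ) (hκmem : ∀ k, κ k ∈ Set.Icc (0:ℝ) 1)
    (hκdense : closure (Set.range κ) = Set.Icc (0:ℝ) 1) (hκ0 : κ 0 = 0) :
    ∃ K₀ : ℕ, ∀ K ≥ K₀,
      (∀ B : List (Fin n), ∃ C : ℝ, ∀ ξ : Fin n → ℝ, ξ ≠ 0 →
        ‖ξ‖ ^ (B.length : ℝ) *
          ‖multiDeriv (B.map (fun i => Pi.single i (1:ℝ)))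
            (fun ξ' => ∑ k₁ ∈ Finset.range K, ∑ k₂ ∈ Finset.range K,
              M ((2:ℝ)^(κ k₁) •
                Matrix.mulVec ((A k₂ : Matrix (Fin n) (Fin n) ℝ))⁻¹ ξ')) ξ‖ ≤ C) ∧
      (∃ c : ℝ, 0 < c ∧ ∀ ξ : Fin n → ℝ, ξ ≠ 0 →
        c ≤ ∑ k₁ ∈ Finset.range K, ∑ k₂ ∈ Finset.range K,
          M ((2:ℝ)^(κ k₁) •
            Matrix.mulVec ((A k₂ : Matrix (Fin n) (Fin n) ℝ))⁻¹ ξ)) := by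
  classical
  have hUopen : IsOpen {ξ : Fin n → ℝ | ξ ≠ 0} := isOpen_ne_zero'
  have hTwoPow : ∀ t : ℝ, (2:ℝ) ^ t ≠ 0 :=
    fun t => ne_of_gt (Real.rpow_pos_of_pos two_pos _)
  -- Part (i), valid for every K
  have parti : ∀ K : ℕ, ∀ B : List (Fin n), ∃ C : ℝ, ∀ ξ : Fin n → ℝ, ξ ≠ 0 →
      ‖ξ‖ ^ (B.length : ℝ) *
        ‖multiDeriv (B.map (fun i => Pi.single i (1:ℝ)))
          (fun ξ' => ∑ k₁ ∈ Finset.range K, ∑ k₂ ∈ Finset.range K,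
            M ((2:ℝ)^(κ k₁) •
              Matrix.mulVec ((A k₂ : Matrix (Fin n) (Fin n) ℝ))⁻¹ ξ')) ξ‖ ≤ C := by
    intro K B
    have hterm : ∀ k₁ k₂ : ℕ, ∃ C : ℝ, ∀ ξ : Fin n → ℝ, ξ ≠ 0 →
        ‖ξ‖ ^ (B.length : ℝ) * ‖multiDeriv (B.map (fun i => Pi.single i (1:ℝ)))
          (fun y => M ((2:ℝ)^(κ k₁) •
            Matrix.mulVec ((A k₂ : Matrix (Fin n) (Fin n) ℝ))⁻¹ y)) ξ‖ ≤ C := by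
      intro k₁ k₂
      set T : (Fin n → ℝ) →L[ℝ] (Fin n → ℝ) := (2:ℝ)^(κ k₁) •
        (LinearMap.toContinuousLinearMap
          (Matrix.mulVecLin ((A k₂ : Matrix (Fin n) (Fin n) ℝ))⁻¹)) with hT
      set S : (Fin n → ℝ) →L[ℝ] (Fin n → ℝ) := ((2:ℝ)^(κ k₁))⁻¹ •
        (LinearMap.toContinuousLinearMap
          (Matrix.mulVecLin (A k₂ : Matrix (Fin n) (Fin n) ℝ))) with hS
      have hTapp : ∀ y, T y = (2:ℝ)^(κ k₁) •
          Matrix.mulVec ((A k₂ : Matrix (Fin n) (Fin n) ℝ))⁻¹ y := by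
        intro y
        simp [hT, Matrix.mulVecLin_apply]
      have hST : ∀ y, S (T y) = y := by
        intro y
        simp only [hTapp, hS, ContinuousLinearMap.smul_apply,
          LinearMap.coe_toContinuousLinearMap', Matrix.mulVecLin_apply]
        rw [Matrix.mulVec_smul, smul_smul, inv_mul_cancel₀ (hTwoPow (κ k₁)),
          Matrix.mulVec_mulVec, so_mul_inv, one_smul, Matrix.one_mulVec]
      obtain ⟨C, hC⟩ := term_bound hn M hMsmooth hMsemi T S hST B
      refine ⟨C, fun ξ hξ => ?_⟩
      have hfun : (fun y => M ((2:ℝ)^(κ k₁) •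
          Matrix.mulVec ((A k₂ : Matrix (Fin n) (Fin n) ℝ))⁻¹ y)) = fun y => M (T y) := by
        funext y
        rw [hTapp]
      rw [hfun]
      exact hC ξ hξ
    choose C0 hC0 using hterm
    refine ⟨∑ p ∈ Finset.range K ×ˢ Finset.range K, C0 p.1 p.2, ?_⟩
    intro ξ hξ
    have hsmoothT : ∀ p : ℕ × ℕ, ContDiffOn ℝ (⊤ : ℕ∞)
        (fun y => M ((2:ℝ)^(κ p.1) •
          Matrix.mulVec ((A p.2 : Matrix (Fin n) (Fin n) ℝ))⁻¹ y))
        {ξ : Fin n → ℝ | ξ ≠ 0} := by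
      intro p
      have h1 : ContDiff ℝ (⊤ : ℕ∞) (fun y : Fin n → ℝ => (2:ℝ)^(κ p.1) •
          Matrix.mulVec ((A p.2 : Matrix (Fin n) (Fin n) ℝ))⁻¹ y) := by
        have h2 := ((2:ℝ)^(κ p.1) • (LinearMap.toContinuousLinearMap
          (Matrix.mulVecLin ((A p.2 : Matrix (Fin n) (Fin n) ℝ))⁻¹))).contDiff (n := ((⊤ : ℕ∞) : WithTop ℕ∞))
        convert h2 using 1
        funext y
        simp [Matrix.mulVecLin_apply]
      refine ContDiffOn.comp hMsmooth (h1.contDiffOn) ?_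
      intro y hy
      exact smul_ne_zero (hTwoPow (κ p.1)) (so_inv_mulVec_ne_zero (A p.2) hy)
    have hrw : (fun ξ' => ∑ k₁ ∈ Finset.range K, ∑ k₂ ∈ Finset.range K,
        M ((2:ℝ)^(κ k₁) • Matrix.mulVec ((A k₂ : Matrix (Fin n) (Fin n) ℝ))⁻¹ ξ'))
        = fun ξ' => ∑ p ∈ Finset.range K ×ˢ Finset.range K,
            M ((2:ℝ)^(κ p.1) • Matrix.mulVec ((A p.2 : Matrix (Fin n) (Fin n) ℝ))⁻¹ ξ') := by
      funext ξ'
      rw [Finset.sum_product]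
    rw [hrw, multiDeriv_sum hUopen _ _ (fun p _ => hsmoothT p) _ hξ]
    have hnn : (0:ℝ) ≤ ‖ξ‖ ^ (B.length : ℝ) := Real.rpow_nonneg (norm_nonneg _) _
    refine le_trans (mul_le_mul_of_nonneg_left (norm_sum_le _ _) hnn) ?_
    rw [Finset.mul_sum]
    exact Finset.sum_le_sum (fun p _ => hC0 p.1 p.2 ξ hξ)
  -- Part (ii)
  set Sann : Set (Fin n → ℝ) := {ξ | 1 ≤ ‖ξ‖ ∧ ‖ξ‖ ≤ 2} with hSann
  have hcompact : IsCompact Sann := by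
    have heq : Sann = Metric.closedBall 0 2 ∩ {ξ : Fin n → ℝ | 1 ≤ ‖ξ‖} := by
      ext ζ
      simp [hSann, mem_closedBall_zero_iff, and_comm]
    rw [heq]
    exact (isCompact_closedBall _ _).inter_right
      (isClosed_le continuous_const continuous_norm)
  have claim : ∀ ξ ∈ Sann, ∃ (W : Set (Fin n → ℝ)) (k₁ k₂ : ℕ) (δ : ℝ),
      W ∈ nhds ξ ∧ 0 < δ ∧ ∀ η ∈ W,
        δ ≤ M ((2:ℝ)^(κ k₁) • Matrix.mulVec ((A k₂ : Matrix (Fin n) (Fin n) ℝ))⁻¹ η) := by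
    intro ξ hξS
    have hξ : ξ ≠ 0 := by
      intro h
      rw [h] at hξS
      simp [hSann] at hξS
      linarith
    obtain ⟨a₀, t₀, ht₀, hδ⟩ := exists_pos_point M hMnonneg μ α hα havg hξ
    set δ := M ((2:ℝ)^t₀ • Matrix.mulVec (a₀ : Matrix (Fin n) (Fin n) ℝ) ξ) with hδdef
    set b₀ : ↥(Matrix.specialOrthogonalGroup (Fin n) ℝ) :=
      ⟨star (a₀ : Matrix (Fin n) (Fin n) ℝ), so_star_mem a₀⟩ with hb₀
    have hbinv : ((b₀ : Matrix (Fin n) (Fin n) ℝ))⁻¹ = (a₀ : Matrix (Fin n) (Fin n) ℝ) :=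
      Matrix.inv_eq_left_inv a₀.2.1.2
    set H : ℝ × ↥(Matrix.specialOrthogonalGroup (Fin n) ℝ) × (Fin n → ℝ) → ℝ :=
      fun p => M ((2:ℝ)^p.1 • Matrix.mulVec ((p.2.1 : Matrix (Fin n) (Fin n) ℝ))⁻¹ p.2.2)
      with hH
    have hval : H (t₀, b₀, ξ) = δ := by
      simp only [hH, hbinv]
      rfl
    have harg : (2:ℝ)^t₀ • Matrix.mulVec (a₀ : Matrix (Fin n) (Fin n) ℝ) ξ ≠ 0 :=
      smul_ne_zero (hTwoPow t₀) (so_mulVec_ne_zero a₀ hξ)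
    have hHcont : ContinuousAt H (t₀, b₀, ξ) := by
      have hGc := continuous_G (n := n)
      have hGat : (2:ℝ)^(t₀, b₀, ξ).1 • Matrix.mulVec
          (((t₀, b₀, ξ).2.1 : Matrix (Fin n) (Fin n) ℝ))⁻¹ (t₀, b₀, ξ).2.2
          ∈ {ξ : Fin n → ℝ | ξ ≠ 0} := by
        simp only [hbinv]
        exact harg
      exact ContinuousAt.comp (hMcont.continuousAt (hUopen.mem_nhds hGat)) hGc.continuousAt
    have hVmem : H ⁻¹' (Set.Ioi (δ/2)) ∈ nhds (t₀, b₀, ξ) := by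
      refine hHcont.preimage_mem_nhds (Ioi_mem_nhds ?_)
      rw [hval]
      linarith
    obtain ⟨u, hu, z, hz, huz⟩ := mem_nhds_prod_iff.mp hVmem
    obtain ⟨v, hv, w, hw, hvw⟩ := mem_nhds_prod_iff.mp hz
    have ht₀cl : t₀ ∈ closure (Set.range κ) := by
      rw [hκdense]
      exact ht₀
    obtain ⟨s, hsu, hsk⟩ := (mem_closure_iff_nhds.mp ht₀cl u hu)
    obtain ⟨k₁, hk₁⟩ := hsk
    obtain ⟨b, hbv, hbk⟩ := (mem_closure_iff_nhds.mp (hAdense b₀) v hv)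
    obtain ⟨k₂, hk₂⟩ := hbk
    refine ⟨w, k₁, k₂, δ/2, hw, by linarith, ?_⟩
    intro η hη
    have hmemV : (κ k₁, A k₂, η) ∈ H ⁻¹' (Set.Ioi (δ/2)) := by
      apply huz
      refine Set.mk_mem_prod ?_ ?_
      · rw [hk₁]; exact hsu
      · apply hvw
        refine Set.mk_mem_prod ?_ hη
        rw [hk₂]; exact hbv
    exact le_of_lt hmemV
  choose W k₁f k₂f δf hW hδf hMW using claim
  obtain ⟨t, ht⟩ := hcompact.elim_nhds_subcover' (fun ξ hξ => W ξ hξ) (fun ξ hξ => hW ξ hξ)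
  set K₀ : ℕ := (t.sup fun x => max (k₁f x.1 x.2) (k₂f x.1 x.2)) + 1 with hK₀
  refine ⟨K₀, fun K hK => ⟨parti K, ?_⟩⟩
  -- lower bound
  rcases t.eq_empty_or_nonempty with hte | htne
  · refine ⟨1, one_pos, ?_⟩
    intro ξ hξ
    obtain ⟨j, hj1, hj2⟩ := exists_zpow_mem_annulus (n := n) hξ
    have hmem : (2:ℝ)^j • ξ ∈ Sann := ⟨hj1, hj2⟩
    have := ht hmem
    rw [hte] at this
    simp at this
  · set c : ℝ := t.inf' htne (fun x => δf x.1 x.2) with hc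
    have hcpos : 0 < c := by
      rw [hc, Finset.lt_inf'_iff]
      exact fun x _ => hδf x.1 x.2
    refine ⟨c, hcpos, ?_⟩
    intro ξ hξ
    obtain ⟨j, hj1, hj2⟩ := exists_zpow_mem_annulus (n := n) hξ
    set η := (2:ℝ)^j • ξ with hη
    have hmem : η ∈ Sann := ⟨hj1, hj2⟩
    obtain ⟨x, hxt, hηW⟩ := Set.mem_iUnion₂.mp (ht hmem)
    have hbound : δf x.1 x.2 ≤ M ((2:ℝ)^(κ (k₁f x.1 x.2)) •
        Matrix.mulVec ((A (k₂f x.1 x.2) : Matrix (Fin n) (Fin n) ℝ))⁻¹ η) :=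
      hMW x.1 x.2 η hηW
    have hk₁K : k₁f x.1 x.2 < K := by
      have h1 : max (k₁f x.1 x.2) (k₂f x.1 x.2) ≤ t.sup fun y => max (k₁f y.1 y.2) (k₂f y.1 y.2) :=
        Finset.le_sup (f := fun y => max (k₁f y.1 y.2) (k₂f y.1 y.2)) hxt
      omega
    have hk₂K : k₂f x.1 x.2 < K := by
      have h1 : max (k₁f x.1 x.2) (k₂f x.1 x.2) ≤ t.sup fun y => max (k₁f y.1 y.2) (k₂f y.1 y.2) :=
        Finset.le_sup (f := fun y => max (k₁f y.1 y.2) (k₂f y.1 y.2)) hxt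
      omega
    have hdil : ∀ k₁ k₂ : ℕ,
        M ((2:ℝ)^(κ k₁) • Matrix.mulVec ((A k₂ : Matrix (Fin n) (Fin n) ℝ))⁻¹ η)
        = M ((2:ℝ)^(κ k₁) • Matrix.mulVec ((A k₂ : Matrix (Fin n) (Fin n) ℝ))⁻¹ ξ) := by
      intro k₁ k₂
      rw [hη, Matrix.mulVec_smul, smul_comm, M_dil_zpow M hMdil j]
    have hsum1 : M ((2:ℝ)^(κ (k₁f x.1 x.2)) •
        Matrix.mulVec ((A (k₂f x.1 x.2) : Matrix (Fin n) (Fin n) ℝ))⁻¹ η)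
        ≤ ∑ k₂ ∈ Finset.range K, M ((2:ℝ)^(κ (k₁f x.1 x.2)) •
          Matrix.mulVec ((A k₂ : Matrix (Fin n) (Fin n) ℝ))⁻¹ η) :=
      Finset.single_le_sum (f := fun k₂ => M ((2:ℝ)^(κ (k₁f x.1 x.2)) •
          Matrix.mulVec ((A k₂ : Matrix (Fin n) (Fin n) ℝ))⁻¹ η))
        (fun _ _ => hMnonneg _) (Finset.mem_range.mpr hk₂K)
    have hsum2 : (∑ k₂ ∈ Finset.range K, M ((2:ℝ)^(κ (k₁f x.1 x.2)) •
          Matrix.mulVec ((A k₂ : Matrix (Fin n) (Fin n) ℝ))⁻¹ η))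
        ≤ ∑ k₁ ∈ Finset.range K, ∑ k₂ ∈ Finset.range K, M ((2:ℝ)^(κ k₁) •
          Matrix.mulVec ((A k₂ : Matrix (Fin n) (Fin n) ℝ))⁻¹ η) :=
      Finset.single_le_sum (f := fun k₁ => ∑ k₂ ∈ Finset.range K, M ((2:ℝ)^(κ k₁) •
          Matrix.mulVec ((A k₂ : Matrix (Fin n) (Fin n) ℝ))⁻¹ η))
        (fun _ _ => Finset.sum_nonneg (fun _ _ => hMnonneg _)) (Finset.mem_range.mpr hk₁K)
    have hceq : (∑ k₁ ∈ Finset.range K, ∑ k₂ ∈ Finset.range K, M ((2:ℝ)^(κ k₁) •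
          Matrix.mulVec ((A k₂ : Matrix (Fin n) (Fin n) ℝ))⁻¹ η))
        = ∑ k₁ ∈ Finset.range K, ∑ k₂ ∈ Finset.range K, M ((2:ℝ)^(κ k₁) •
          Matrix.mulVec ((A k₂ : Matrix (Fin n) (Fin n) ℝ))⁻¹ ξ) := by
      refine Finset.sum_congr rfl (fun k₁ _ => Finset.sum_congr rfl (fun k₂ _ => hdil k₁ k₂))
    calc c ≤ δf x.1 x.2 := Finset.inf'_le _ hxt
      _ ≤ _ := hbound
      _ ≤ _ := hsum1
      _ ≤ _ := hsum2
      _ = _ := hceq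

end
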